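/- Let ν, λ₁, c > 0 and z : ℝ → ℝ≥0 locally integrable with lim_{t→−∞} (1/|t|)∫_t^0 z(s) ds = L where cL < νλ₁/2. Then ∫_{−∞}^0 exp(νλ₁ s + c ∫_s^0 z(ζ) dζ) ds < ∞. -/
import Mathlib


open MeasureTheory Filter

lemma exp_mul_integrableOn_Iic {k : ℝ} (hk : 0 < k) (a : ℝ) :
    IntegrableOn (fun s : ℝ => Real.exp (k * s)) (Set.Iic a) volume := by
  refine integrableOn_Iic_of_intervalIntegral_norm_bounded (Real.exp (k * a) / k) a
    (fun y : ℝ => ((Real.continuous_exp.comp (continuous_const.mul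
      continuous_id)).intervalIntegrable _ _).1) tendsto_id
    (Filter.Eventually.of_forall fun y => ?_)
  have h1 : (∫ x in y..a, ‖Real.exp (k * x)‖) = ∫ x in y..a, Real.exp (k * x) := by
    congr 1
    ext x
    exact Real.norm_of_nonneg (Real.exp_pos _).le
  simp only [id]
  rw [h1, intervalIntegral.integral_comp_mul_left (fun u => Real.exp u) hk.ne']
  rw [integral_exp, smul_eq_mul]
  rw [div_eq_inv_mul]
  have : Real.exp (k * a) - Real.exp (k * y) ≤ Real.exp (k * a) := by
    have := (Real.exp_pos (k * y)).le
    linarith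
  have hkinv : (0 : ℝ) ≤ k⁻¹ := (inv_pos.mpr hk).le
  exact mul_le_mul_of_nonneg_left this hkinv

/-- If the averages (1/|t|)∫_t^0 z tend to L as t → −∞ with cL < νλ₁/2, then
∫_{−∞}^0 exp(νλ₁ s + c ∫_s^0 z) ds < ∞. -/
theorem exp_weight_integrable (ν lam c L : ℝ) (hν : 0 < ν) (hlam : 0 < lam)
    (hc : 0 < c) (z : ℝ → ℝ) (hz : ∀ t, 0 ≤ z t)
    (hloc : LocallyIntegrable z volume)
    (havg : Tendsto (fun t : ℝ => (1 / |t|) * ∫ s in t..(0 : ℝ), z s) atBot (nhds L))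
    (hL : c * L < ν * lam / 2) :
    IntegrableOn
      (fun s : ℝ => Real.exp (ν * lam * s + c * ∫ ζ in s..(0 : ℝ), z ζ))
      (Set.Iic (0 : ℝ)) volume := by
  set k : ℝ := ν * lam with hk
  have hkpos : 0 < k := mul_pos hν hlam
  -- interval integrability of z
  have hzint : ∀ a b : ℝ, IntervalIntegrable z volume a b := fun a b =>
    (hloc.integrableOn_isCompact isCompact_uIcc).intervalIntegrable
  -- continuity of the primitive
  have hcont : Continuous fun s : ℝ => ∫ ζ in s..(0 : ℝ), z ζ := by
    have h0 : Continuous fun s : ℝ => ∫ ζ in (0 : ℝ)..s, z ζ :=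
      intervalIntegral.continuous_primitive hzint 0
    have : (fun s : ℝ => ∫ ζ in s..(0 : ℝ), z ζ)
        = fun s : ℝ => -(∫ ζ in (0 : ℝ)..s, z ζ) := by
      funext s; rw [intervalIntegral.integral_symm]
    rw [this]
    exact h0.neg
  have hFcont : Continuous
      (fun s : ℝ => Real.exp (ν * lam * s + c * ∫ ζ in s..(0 : ℝ), z ζ)) :=
    Real.continuous_exp.comp ((continuous_const.mul continuous_id).add
      (continuous_const.mul hcont))
  -- find threshold t₀
  have hL' : L < k / (2 * c) := by
    rw [lt_div_iff₀ (by positivity)]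
    calc L * (2 * c) = 2 * (c * L) := by ring
    _ < 2 * (k / 2) := by
        apply mul_lt_mul_of_pos_left _ two_pos
        exact hL
    _ = k := by ring
  have hev : ∀ᶠ t in atBot, (1 / |t|) * (∫ s in t..(0 : ℝ), z s) < k / (2 * c) :=
    havg.eventually_lt_const hL'
  obtain ⟨t₀, ht₀⟩ := (hev.and (eventually_le_atBot (-1 : ℝ))).exists_forall_of_atBot
  have ht₀neg : t₀ ≤ 0 := le_trans (ht₀ t₀ le_rfl).2 (by norm_num)
  -- bound on Iic t₀
  have hbound : ∀ s ≤ t₀, ν * lam * s + c * (∫ ζ in s..(0 : ℝ), z ζ) ≤ (k / 2) * s := by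
    intro s hs
    obtain ⟨h1, h2⟩ := ht₀ s hs
    have hsneg : s < 0 := lt_of_le_of_lt h2 (by norm_num)
    have habs : |s| = -s := abs_of_neg hsneg
    have habs0 : (0 : ℝ) < |s| := abs_pos.mpr hsneg.ne
    -- ∫ s..0 z = |s| * avg
    have hI : (∫ ζ in s..(0 : ℝ), z ζ) = |s| * ((1 / |s|) * ∫ ζ in s..(0 : ℝ), z ζ) := by
      field_simp
    have hIb : (∫ ζ in s..(0 : ℝ), z ζ) ≤ |s| * (k / (2 * c)) := by
      rw [hI]
      exact mul_le_mul_of_nonneg_left h1.le habs0.le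
    have : c * (∫ ζ in s..(0 : ℝ), z ζ) ≤ c * (|s| * (k / (2 * c))) :=
      mul_le_mul_of_nonneg_left hIb hc.le
    have hcalc : c * (|s| * (k / (2 * c))) = -(k / 2) * s := by
      rw [habs]; field_simp
    nlinarith
  -- integrable on Iic t₀
  have h1 : IntegrableOn
      (fun s : ℝ => Real.exp (ν * lam * s + c * ∫ ζ in s..(0 : ℝ), z ζ))
      (Set.Iic t₀) volume := by
    refine Integrable.mono' ((exp_mul_integrableOn_Iic (by positivity : (0:ℝ) < k / 2) t₀))
      (hFcont.aestronglyMeasurable.restrict) ?_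
    filter_upwards [ae_restrict_mem measurableSet_Iic] with s hs
    rw [Real.norm_of_nonneg (Real.exp_pos _).le]
    exact Real.exp_le_exp.mpr (hbound s hs)
  -- integrable on Icc t₀ 0
  have h2 : IntegrableOn
      (fun s : ℝ => Real.exp (ν * lam * s + c * ∫ ζ in s..(0 : ℝ), z ζ))
      (Set.Icc t₀ 0) volume := hFcont.continuousOn.integrableOn_Icc
  have hunion : Set.Iic t₀ ∪ Set.Icc t₀ 0 = Set.Iic (0 : ℝ) :=
    Set.Iic_union_Icc_eq_Iic ht₀neg
  rw [← hunion]
  exact h1.union h2
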